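/- Let μ be a finite Borel measure on ℝⁿ and 0 ≤ α < n. Then there is a constant C = C(n,α) such that for every λ > 0, the Hausdorff content of the level set satisfies ℋ_∞^{n-α}({x ∈ ℝⁿ : M_α μ(x) > λ}) ≤ (C/λ) · μ(ℝⁿ). -/

import Mathlib

open MeasureTheory
open scoped ENNReal

noncomputable def fracMax (n : ℕ) (α : ℝ) (μ : Measure (EuclideanSpace ℝ (Fin n)))
    (x : EuclideanSpace ℝ (Fin n)) : ℝ≥0∞ :=
  ⨆ (r : ℝ) (_ : 0 < r),
    ENNReal.ofReal (r ^ α) * μ (Metric.ball x r) / volume (Metric.ball x r)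

def axisCube (n : ℕ) (c : Fin n → ℝ) (l : ℝ) : Set (EuclideanSpace ℝ (Fin n)) :=
  {y | ∀ i, c i ≤ y i ∧ y i ≤ c i + l}

noncomputable def hausdorffContent (n : ℕ) (s : ℝ) (E : Set (EuclideanSpace ℝ (Fin n))) :
    ℝ≥0∞ :=
  ⨅ (c : ℕ → Fin n → ℝ) (l : ℕ → ℝ) (_ : ∀ k, 0 ≤ l k)
    (_ : E ⊆ ⋃ k, axisCube n (c k) (l k)),
      ∑' k, ENNReal.ofReal (l k ^ s)

/-!
Every point `x` of the level set is the centre of a ball `B(x, r)` with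
`μ(B(x, r)) > λ |B₁| r^(n-α)`. As `μ` is finite these radii are bounded, so Vitali's covering
lemma yields a countable disjoint subfamily whose fourfold enlargements cover the level set.
An enlarged ball lies in a cube of side `8r`, and the balls are disjoint, whence
`ℋ_∞^(n-α) ≤ ∑ (8r)^(n-α) ≤ 8^(n-α) / (λ |B₁|) ∑ μ(B(x, r)) ≤ 8^(n-α) / (λ |B₁|) μ(ℝⁿ)`.
-/

open Metric

noncomputable def unitBallVolume (n : ℕ) : ℝ :=
  (volume (ball (0 : EuclideanSpace ℝ (Fin n)) 1)).toReal

theorem unitBallVolume_pos (n : ℕ) : 0 < unitBallVolume n :=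
  ENNReal.toReal_pos (measure_ball_pos volume _ one_pos).ne' measure_ball_lt_top.ne

theorem closedBall_subset_axisCube {n : ℕ} (x : EuclideanSpace ℝ (Fin n)) (ρ : ℝ) :
    closedBall x ρ ⊆ axisCube n (fun i => x i - ρ) (2 * ρ) := by
  intro y hy i
  have hyi : |y i - x i| ≤ ρ :=
    (PiLp.dist_apply_le y x i).trans (mem_closedBall.1 hy)
  constructor <;> linarith [abs_le.1 hyi]

theorem hausdorffContent_le_tsum {n : ℕ} {s : ℝ} (hs : s ≠ 0) {ι : Type*} [Countable ι]
    {E : Set (EuclideanSpace ℝ (Fin n))} (c : ι → Fin n → ℝ) (l : ι → ℝ) (hl : ∀ i, 0 ≤ l i)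
    (hE : E ⊆ ⋃ i, axisCube n (c i) (l i)) :
    hausdorffContent n s E ≤ ∑' i, ENNReal.ofReal (l i ^ s) := by
  obtain ⟨g, hg⟩ := Countable.exists_injective_nat ι
  -- Pad the family with degenerate cubes, which cost `0 ^ s = 0`.
  have hcover : E ⊆ ⋃ k, axisCube n (Function.extend g c 0 k) (Function.extend g l 0 k) :=
    hE.trans <| Set.iUnion_subset fun i =>
      Set.subset_iUnion_of_subset (g i) (by rw [hg.extend_apply, hg.extend_apply])
  have hl_ext : ∀ k, 0 ≤ Function.extend g l 0 k := fun k => by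
    rcases em (∃ i, g i = k) with ⟨i, rfl⟩ | hk
    · simpa [hg.extend_apply] using hl i
    · simp [Function.extend_apply' _ _ _ hk]
  calc hausdorffContent n s E
      ≤ ∑' k, ENNReal.ofReal (Function.extend g l 0 k ^ s) :=
        iInf_le_of_le _ <| iInf_le_of_le _ <| iInf_le_of_le hl_ext <| iInf_le _ hcover
    _ = ∑' k, Function.extend g (fun i => ENNReal.ofReal (l i ^ s)) 0 k := by
        congr 1
        funext k
        rw [Function.apply_extend (fun t : ℝ => ENNReal.ofReal (t ^ s))]
        congr 1
        funext
        simp [Real.zero_rpow hs]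
    _ = ∑' i, ENNReal.ofReal (l i ^ s) := tsum_extend_zero hg _

theorem hausdorffContent_le_tsum_closedBall {n : ℕ} {s : ℝ} (hs : s ≠ 0) {ι : Type*}
    [Countable ι] {E : Set (EuclideanSpace ℝ (Fin n))} (x : ι → EuclideanSpace ℝ (Fin n))
    (ρ : ι → ℝ) (hρ : ∀ i, 0 ≤ ρ i) (hE : E ⊆ ⋃ i, closedBall (x i) (ρ i)) :
    hausdorffContent n s E ≤ ∑' i, ENNReal.ofReal ((2 * ρ i) ^ s) :=
  hausdorffContent_le_tsum hs _ _ (fun i => mul_nonneg zero_le_two (hρ i)) <|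
    hE.trans <| Set.iUnion_mono fun i => closedBall_subset_axisCube (x i) (ρ i)

theorem exists_countable_disjoint_closedBall_subfamily_covering {X : Type*} [MetricSpace X]
    [TopologicalSpace.SeparableSpace X] (t : Set X) (r : X → ℝ) (R : ℝ)
    (hr : ∀ x ∈ t, 0 < r x) (hrR : ∀ x ∈ t, r x ≤ R) :
    ∃ u ⊆ t, u.Countable ∧ u.PairwiseDisjoint (fun x => closedBall x (r x)) ∧
      t ⊆ ⋃ x ∈ u, closedBall x (4 * r x) := by
  obtain ⟨u, hut, hdisj, hcov⟩ :=
    Vitali.exists_disjoint_subfamily_covering_enlargement_closedBall t id r R hrR 4 (by norm_num)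
  refine ⟨u, hut, hdisj.countable_of_nonempty_interior fun x hx => ?_, hdisj, fun x hx => ?_⟩
  · exact ⟨x, ball_subset_interior_closedBall (mem_ball_self (hr x (hut hx)))⟩
  · obtain ⟨y, hyu, hxy⟩ := hcov x hx
    exact Set.mem_biUnion hyu (hxy (mem_closedBall_self (hr x hx).le))

theorem hausdorffContent_le_of_forall_exists_measure_closedBall_ge {n : ℕ} {s K : ℝ}
    (hs : 0 < s) (hK : 0 < K) (μ : Measure (EuclideanSpace ℝ (Fin n))) [IsFiniteMeasure μ]
    {E : Set (EuclideanSpace ℝ (Fin n))}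
    (hE : ∀ x ∈ E, ∃ r > 0, ENNReal.ofReal (K * r ^ s) ≤ μ (closedBall x r)) :
    hausdorffContent n s E ≤ ENNReal.ofReal (8 ^ s / K) * μ Set.univ := by
  choose! r hr0 hr using hE
  have hrR : ∀ x ∈ E, r x ≤ (μ.real Set.univ / K) ^ s⁻¹ := by
    intro x hx
    rw [Real.le_rpow_inv_iff_of_pos (hr0 x hx).le (by positivity) hs, le_div_iff₀' hK]
    exact (ENNReal.ofReal_le_iff_le_toReal (measure_ne_top μ _)).1 <|
      (hr x hx).trans (measure_mono (Set.subset_univ _))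
  obtain ⟨u, huE, hu, hdisj, hcov⟩ :=
    exists_countable_disjoint_closedBall_subfamily_covering E r _ hr0 hrR
  have : Countable u := hu.to_subtype
  have hterm : ∀ x ∈ E, ENNReal.ofReal ((2 * (4 * r x)) ^ s) =
      ENNReal.ofReal (8 ^ s / K) * ENNReal.ofReal (K * r x ^ s) := fun x hx => by
    rw [← ENNReal.ofReal_mul (by positivity), ← mul_assoc,
      Real.mul_rpow (by norm_num) (hr0 x hx).le]
    congr 1
    field_simp
    ring_nf
  calc hausdorffContent n s E
      ≤ ∑' x : u, ENNReal.ofReal ((2 * (4 * r x)) ^ s) :=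
        hausdorffContent_le_tsum_closedBall hs.ne' (↑) (fun x : u => 4 * r x)
          (fun x => by linarith [hr0 x (huE x.2)]) (by rwa [Set.biUnion_eq_iUnion] at hcov)
    _ ≤ ∑' x : u, ENNReal.ofReal (8 ^ s / K) * μ (closedBall x (r x)) :=
        ENNReal.tsum_le_tsum fun x =>
          (hterm x (huE x.2)).trans_le (by gcongr; exact hr x (huE x.2))
    _ = ENNReal.ofReal (8 ^ s / K) * μ (⋃ x ∈ u, closedBall x (r x)) := by
        rw [ENNReal.tsum_mul_left, measure_biUnion hu hdisj fun _ _ => measurableSet_closedBall]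
    _ ≤ ENNReal.ofReal (8 ^ s / K) * μ Set.univ := by gcongr; exact Set.subset_univ _

theorem volume_ball_eq_rpow_mul {n : ℕ} (x : EuclideanSpace ℝ (Fin n)) {r : ℝ} (hr : 0 < r)
    (α : ℝ) :
    volume (ball x r) =
      ENNReal.ofReal (r ^ α) * ENNReal.ofReal (unitBallVolume n * r ^ ((n : ℝ) - α)) := by
  have hsplit : r ^ α * (unitBallVolume n * r ^ ((n : ℝ) - α)) = r ^ n * unitBallVolume n := by
    rw [mul_left_comm, ← Real.rpow_add hr, add_sub_cancel, Real.rpow_natCast, mul_comm]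
  rw [← ENNReal.ofReal_mul (by positivity), hsplit,
    ENNReal.ofReal_mul (by positivity), unitBallVolume,
    ENNReal.ofReal_toReal measure_ball_lt_top.ne, Measure.addHaar_ball_of_pos _ _ hr,
    finrank_euclideanSpace_fin]

theorem exists_lt_measure_ball_of_lt_fracMax {n : ℕ} {α lam : ℝ}
    {μ : Measure (EuclideanSpace ℝ (Fin n))} {x : EuclideanSpace ℝ (Fin n)}
    (hx : ENNReal.ofReal lam < fracMax n α μ x) :
    ∃ r > 0, ENNReal.ofReal (lam * unitBallVolume n * r ^ ((n : ℝ) - α)) < μ (ball x r) := by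
  simp only [fracMax, lt_iSup_iff] at hx
  obtain ⟨r, hr, hlt⟩ := hx
  refine ⟨r, hr, ?_⟩
  have hrα : ENNReal.ofReal (r ^ α) ≠ 0 := by simpa using Real.rpow_pos_of_pos hr α
  have hmass : 0 ≤ unitBallVolume n * r ^ ((n : ℝ) - α) :=
    mul_nonneg (unitBallVolume_pos n).le (Real.rpow_nonneg hr.le _)
  rw [ENNReal.lt_div_iff_mul_lt (.inl (measure_ball_pos _ x hr).ne')
    (.inl measure_ball_lt_top.ne), volume_ball_eq_rpow_mul x hr α, mul_left_comm,
    ENNReal.mul_lt_mul_iff_right hrα ENNReal.ofReal_ne_top,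
    ← ENNReal.ofReal_mul' hmass] at hlt
  rwa [mul_assoc]

theorem hausdorffContent_fracMax_levelSet (n : ℕ) (α : ℝ) (hαn : α < n) :
    ∃ C : ℝ, 0 < C ∧
      ∀ (μ : Measure (EuclideanSpace ℝ (Fin n))) [IsFiniteMeasure μ] (lam : ℝ),
        0 < lam →
          hausdorffContent n ((n : ℝ) - α) {x | ENNReal.ofReal lam < fracMax n α μ x} ≤
            (ENNReal.ofReal (C / lam)) * μ Set.univ := by
  have hc := unitBallVolume_pos n
  refine ⟨8 ^ ((n : ℝ) - α) / unitBallVolume n, by positivity, fun μ _ lam hlam => ?_⟩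
  rw [div_div, mul_comm (unitBallVolume n)]
  refine hausdorffContent_le_of_forall_exists_measure_closedBall_ge (sub_pos.2 hαn)
    (by positivity) μ fun x hx => ?_
  obtain ⟨r, hr, hlt⟩ := exists_lt_measure_ball_of_lt_fracMax hx
  exact ⟨r, hr, hlt.le.trans (measure_mono ball_subset_closedBall)⟩
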